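/- arXiv:0906.1372 — 6 statements merged into one kernel-verified Lean document; each statement's English description precedes it below -/
import Mathlib

section
/- Let α : X → Y be a function between extended metric spaces. Then the following are equivalent: (a) for every extended metric space Z and all functions f, g : Z → X with sup_{z∈Z} d_X(f(z),g(z)) < ∞, one has sup_{z∈Z} d_Y(α(f(z)),α(g(z))) < ∞; (b) for every t > 0 there is s > 0 such that for all x, y ∈ X, d_X(x,y) < t implies d_Y(α(x),α(y)) < s. -/
open scoped ENNReal

/-! (a) ⇒ (b): apply (a) to the two coordinate projections of the space of pairs at distance
less than `t`. (b) ⇒ (a): a family in `ℝ≥0∞` has finite supremum iff it is uniformly bounded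
by some positive real, so the hypothesis of (a) supplies the `t` of (b). -/

theorem ENNReal.iSup_lt_top_iff_exists_lt_ofReal {ι : Sort*} (a : ι → ℝ≥0∞) :
    iSup a < ⊤ ↔ ∃ t : ℝ, 0 < t ∧ ∀ i, a i < ENNReal.ofReal t := by
  constructor
  · intro h
    refine ⟨(iSup a).toReal + 1, by positivity, fun i => (le_iSup a i).trans_lt ?_⟩
    rw [ENNReal.lt_ofReal_iff_toReal_lt h.ne]
    exact lt_add_one _
  · rintro ⟨t, -, ht⟩
    exact (iSup_le fun i => (ht i).le).trans_lt ENNReal.ofReal_lt_top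

/-- For a function `α : X → Y` between extended metric spaces, the following
are equivalent:
(a) for every extended metric space `Z` and all `f g : Z → X` with
    `sup_z d_X(f z, g z) < ∞`, one has `sup_z d_Y(α (f z), α (g z)) < ∞`;
(b) for every `t > 0` there is `s > 0` such that `d_X(x,y) < t` implies
    `d_Y(α x, α y) < s`. -/
theorem bornologous_iff_controlled {X : Type u} {Y : Type v}
    [EMetricSpace X] [EMetricSpace Y] (α : X → Y) :
    (∀ (Z : Type u) [EMetricSpace Z] (f g : Z → X),
        (⨆ z : Z, edist (f z) (g z)) < ⊤ →
        (⨆ z : Z, edist (α (f z)) (α (g z))) < ⊤) ↔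
    (∀ t : ℝ, 0 < t → ∃ s : ℝ, 0 < s ∧ ∀ x y : X,
        edist x y < ENNReal.ofReal t → edist (α x) (α y) < ENNReal.ofReal s) := by
  simp only [ENNReal.iSup_lt_top_iff_exists_lt_ofReal]
  constructor
  · intro h t ht
    obtain ⟨s, hs, hα⟩ := h {p : X × X // edist p.1 p.2 < ENNReal.ofReal t}
      (fun p => p.1.1) (fun p => p.1.2) ⟨t, ht, fun p => p.2⟩
    exact ⟨s, hs, fun x y hxy => hα ⟨(x, y), hxy⟩⟩
  · rintro h Z _ f g ⟨t, ht, hfg⟩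
    obtain ⟨s, hs, hα⟩ := h t ht
    exact ⟨s, hs, fun z => hα _ _ (hfg z)⟩
end

section
/- Let α : X → Y be a bornologous function between extended metric spaces. Then the following are equivalent: (a) for every extended metric space Z, postcomposition with α is a bijection on ls-equivalence classes; concretely, for all f, g : Z → X, α∘f ~ls α∘g implies f ~ls g, and for every h : Z → Y there exists f : Z → X with α∘f ~ls h; (b) there exists a bornologous function β : Y → X such that α∘β ~ls id_Y and β∘α ~ls id_X. -/
/-!
Surjectivity on ls-classes applied to `id_Y` yields `β` with `α ∘ β ~ls id`, and injectivity turns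
`α ∘ β ∘ α ~ls α` into `β ∘ α ~ls id`. Injectivity tested on the space of pairs at bounded
`α`-distance makes `α` effectively proper, and then `β` is bornologous because `α ∘ β` is
ls-equivalent to the bornologous `id_Y`. Conversely, a bornologous `β` preserves ls-equivalence, so
`α ∘ f ~ls α ∘ g` gives `f ~ls β ∘ α ∘ f ~ls β ∘ α ∘ g ~ls g`, and `β ∘ h` lifts `h`.
-/

open scoped ENNReal NNReal

/-- A function between extended metric spaces is bornologous if for every `t > 0`
there is `s > 0` such that `d(x,y) < t` implies `d(α x, α y) < s`. -/
def Bornologous {X : Type u} {Y : Type v} [EMetricSpace X] [EMetricSpace Y]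
    (α : X → Y) : Prop :=
  ∀ t : ℝ, 0 < t → ∃ s : ℝ, 0 < s ∧ ∀ x y : X,
    edist x y < ENNReal.ofReal t → edist (α x) (α y) < ENNReal.ofReal s

/-- `f ~ls g` : two functions into an extended metric space are ls-equivalent if they
are within finite distance from each other. -/
def LSEquiv {Z : Type w} {X : Type u} [EMetricSpace X] (f g : Z → X) : Prop :=
  (⨆ z : Z, edist (f z) (g z)) < ⊤

def EffectivelyProper {X : Type*} {Y : Type*} [EMetricSpace X] [EMetricSpace Y]
    (α : X → Y) : Prop :=
  ∀ s : ℝ≥0, ∃ r : ℝ≥0, ∀ x x' : X, edist (α x) (α x') ≤ s → edist x x' ≤ r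

section

variable {W Z X Y : Type*} [EMetricSpace X] [EMetricSpace Y]

theorem lsEquiv_iff {f g : Z → X} :
    LSEquiv f g ↔ ∃ C : ℝ≥0, ∀ z, edist (f z) (g z) ≤ C := by
  constructor
  · intro h
    refine ⟨(⨆ z, edist (f z) (g z)).toNNReal, fun z => ?_⟩
    rw [ENNReal.coe_toNNReal h.ne]
    exact le_iSup (fun z => edist (f z) (g z)) z
  · rintro ⟨C, hC⟩
    exact (iSup_le hC).trans_lt ENNReal.coe_lt_top

theorem bornologous_iff {α : X → Y} :
    Bornologous α ↔ ∀ t : ℝ≥0, ∃ s : ℝ≥0, ∀ x y, edist x y ≤ t → edist (α x) (α y) ≤ s := by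
  constructor
  · intro h t
    obtain ⟨s, -, hs⟩ := h ((t + 1 : ℝ≥0) : ℝ) (by positivity)
    refine ⟨s.toNNReal, fun x y hxy => (hs x y ?_).le⟩
    rw [ENNReal.ofReal_coe_nnreal]
    exact hxy.trans_lt (ENNReal.coe_lt_coe.mpr (lt_add_one t))
  · intro h t _
    obtain ⟨s, hs⟩ := h t.toNNReal
    refine ⟨s + 1, by positivity, fun x y hxy => (hs x y hxy.le).trans_lt ?_⟩
    rw [← ENNReal.ofReal_coe_nnreal]
    exact (ENNReal.ofReal_lt_ofReal_iff (by positivity)).mpr (lt_add_one _)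

theorem bornologous_id : Bornologous (fun x : X => x) :=
  fun t ht => ⟨t, ht, fun _ _ h => h⟩

namespace LSEquiv

theorem symm {f g : Z → X} (h : LSEquiv f g) : LSEquiv g f := by
  obtain ⟨C, hC⟩ := lsEquiv_iff.mp h
  exact lsEquiv_iff.mpr ⟨C, fun z => edist_comm (g z) (f z) ▸ hC z⟩

theorem trans {f g k : Z → X} (hfg : LSEquiv f g) (hgk : LSEquiv g k) : LSEquiv f k := by
  obtain ⟨C, hC⟩ := lsEquiv_iff.mp hfg
  obtain ⟨D, hD⟩ := lsEquiv_iff.mp hgk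
  refine lsEquiv_iff.mpr ⟨C + D, fun z => ?_⟩
  calc edist (f z) (k z) ≤ edist (f z) (g z) + edist (g z) (k z) := edist_triangle _ _ _
    _ ≤ C + D := add_le_add (hC z) (hD z)

theorem comp_right {f g : Z → X} (h : LSEquiv f g) (k : W → Z) :
    LSEquiv (fun w => f (k w)) (fun w => g (k w)) := by
  obtain ⟨C, hC⟩ := lsEquiv_iff.mp h
  exact lsEquiv_iff.mpr ⟨C, fun w => hC (k w)⟩

theorem comp_left {β : X → Y} (hβ : Bornologous β) {f g : Z → X} (h : LSEquiv f g) :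
    LSEquiv (fun z => β (f z)) (fun z => β (g z)) := by
  obtain ⟨C, hC⟩ := lsEquiv_iff.mp h
  obtain ⟨s, hs⟩ := bornologous_iff.mp hβ C
  exact lsEquiv_iff.mpr ⟨s, fun z => hs _ _ (hC z)⟩

end LSEquiv

theorem EffectivelyProper.bornologous_of_lsEquiv_comp {α : X → Y} {β : Z → X} {γ : Z → Y}
    [EMetricSpace Z] (hα : EffectivelyProper α) (hγ : Bornologous γ)
    (h : LSEquiv (fun z => α (β z)) γ) : Bornologous β := by
  refine bornologous_iff.mpr fun t => ?_
  obtain ⟨s, hs⟩ := bornologous_iff.mp hγ t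
  obtain ⟨C, hC⟩ := lsEquiv_iff.mp h
  obtain ⟨r, hr⟩ := hα (C + s + C)
  refine ⟨r, fun z z' hzz' => hr _ _ ?_⟩
  calc edist (α (β z)) (α (β z'))
      ≤ edist (α (β z)) (γ z) + edist (γ z) (γ z') + edist (γ z') (α (β z')) :=
        edist_triangle4 _ _ _ _
    _ ≤ C + s + C := by
        rw [edist_comm (γ z')]
        exact add_le_add (add_le_add (hC z) (hs z z' hzz')) (hC z')
    _ = ↑(C + s + C) := by push_cast; rfl

end

/-- Test against the two projections from the space of pairs `(x, x')` with
`d(α x, α x') ≤ s`; its metric plays no role, since `LSEquiv` ignores the domain's metric. -/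
theorem EffectivelyProper.of_reflects_lsEquiv {X Y : Type u} [EMetricSpace X] [EMetricSpace Y]
    {α : X → Y}
    (h : ∀ (Z : Type u) [EMetricSpace Z] (f g : Z → X),
      LSEquiv (fun z => α (f z)) (fun z => α (g z)) → LSEquiv f g) :
    EffectivelyProper α := by
  intro s
  let P := {p : X × X // edist (α p.1) (α p.2) ≤ s}
  have hαP : LSEquiv (fun p : P => α p.1.1) (fun p : P => α p.1.2) :=
    lsEquiv_iff.mpr ⟨s, fun p => p.2⟩
  obtain ⟨r, hr⟩ := lsEquiv_iff.mp (h P (fun p => p.1.1) (fun p => p.1.2) hαP)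
  exact ⟨r, fun x x' hxx' => hr ⟨(x, x'), hxx'⟩⟩

theorem largeScaleIsomorphism_iff_coarse_inverse_general {X Y : Type u}
    [EMetricSpace X] [EMetricSpace Y] (α : X → Y) :
    (∀ (Z : Type u) [EMetricSpace Z],
        (∀ f g : Z → X, LSEquiv (fun z => α (f z)) (fun z => α (g z)) → LSEquiv f g) ∧
        (∀ h : Z → Y, ∃ f : Z → X, LSEquiv (fun z => α (f z)) h)) ↔
    (∃ β : Y → X, Bornologous β ∧
        LSEquiv (fun y => α (β y)) (fun y => y) ∧
        LSEquiv (fun x => β (α x)) (fun x => x)) := by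
  constructor
  · intro H
    obtain ⟨β, hαβ⟩ := (H Y).2 (fun y => y)
    refine ⟨β, ?_, hαβ, (H X).1 _ _ (hαβ.comp_right α)⟩
    exact (EffectivelyProper.of_reflects_lsEquiv fun Z _ => (H Z).1).bornologous_of_lsEquiv_comp
      bornologous_id hαβ
  · rintro ⟨β, hβ, hαβ, hβα⟩
    refine fun Z _ => ⟨fun f g hfg => ?_, fun h => ⟨fun z => β (h z), hαβ.comp_right h⟩⟩
    exact ((hβα.comp_right f).symm.trans (hfg.comp_left hβ)).trans (hβα.comp_right g)

/-- For a bornologous `α : X → Y` the following are equivalent: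
(a) for every extended metric space `Z`, postcomposition with `α` is a bijection on
ls-equivalence classes (injectivity and surjectivity as stated);
(b) there is a bornologous `β : Y → X` with `α ∘ β ~ls id_Y` and `β ∘ α ~ls id_X`. -/
theorem largeScaleIsomorphism_iff_coarse_inverse {X Y : Type u}
    [EMetricSpace X] [EMetricSpace Y] (α : X → Y) (hα : Bornologous α) :
    (∀ (Z : Type u) [EMetricSpace Z],
        (∀ f g : Z → X, LSEquiv (fun z => α (f z)) (fun z => α (g z)) → LSEquiv f g) ∧
        (∀ h : Z → Y, ∃ f : Z → X, LSEquiv (fun z => α (f z)) h)) ↔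
    (∃ β : Y → X, Bornologous β ∧
        LSEquiv (fun y => α (β y)) (fun y => y) ∧
        LSEquiv (fun x => β (α x)) (fun x => x)) :=
  largeScaleIsomorphism_iff_coarse_inverse_general α
end

section
/- A function f : X → Y between extended metric spaces is bornologous if and only if for every graph G (equipped with its graph metric) and every Lipschitz function g : G → X, the composition f ∘ g : G → Y is Lipschitz. -/
open scoped ENNReal NNReal

/-- A function from the vertex set of a graph (with its graph metric, measured by
`SimpleGraph.edist`, which is `∞` when there is no edge-path) to an extended metric
space is Lipschitz if there is `L < ∞` with `d(g v, g w) ≤ L · d_G(v,w)` for all `v, w`. -/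
def GraphLipschitz {V : Type w} {X : Type u} [EMetricSpace X]
    (G : SimpleGraph V) (g : V → X) : Prop :=
  ∃ L : ℝ≥0, ∀ v w : V, edist (g v) (g w) ≤ (L : ℝ≥0∞) * (G.edist v w : ℝ≥0∞)

/-!
A map `g` on the vertices of a graph is Lipschitz for the graph metric exactly when it moves
the endpoints of every edge by a uniformly bounded amount (chain the bound along a geodesic
walk). So post-composition with `f` preserves Lipschitz maps iff `f` sends pairs at distance
`< t` to pairs at bounded distance, for every `t`: for the converse, apply the hypothesis to the
identity of `X` viewed on the graph joining the points at distance `< t`.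
-/

theorem edist_le_mul_length_of_adj_le {V X : Type*} [EMetricSpace X] {G : SimpleGraph V}
    {g : V → X} {C : ℝ≥0∞} (h : ∀ v w, G.Adj v w → edist (g v) (g w) ≤ C)
    {v w : V} (p : G.Walk v w) : edist (g v) (g w) ≤ C * p.length := by
  induction p with
  | nil => simp
  | @cons _ u _ hadj p ih =>
    calc edist (g _) (g _) ≤ edist (g _) (g u) + edist (g u) (g _) := edist_triangle _ _ _
      _ ≤ C + C * p.length := add_le_add (h _ _ hadj) ih
      _ = C * (p.cons hadj).length := by rw [SimpleGraph.Walk.length_cons]; push_cast; ring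

theorem graphLipschitz_iff_exists_adj_le {V X : Type*} [EMetricSpace X] {G : SimpleGraph V}
    {g : V → X} :
    GraphLipschitz G g ↔ ∃ C : ℝ≥0, ∀ v w, G.Adj v w → edist (g v) (g w) ≤ C := by
  constructor
  · rintro ⟨L, hL⟩
    refine ⟨L, fun v w hadj => ?_⟩
    simpa [SimpleGraph.edist_eq_one_iff_adj.2 hadj] using hL v w
  · rintro ⟨C, hC⟩
    -- `C + 1 ≠ 0`, so that unreachable pairs get the bound `(C + 1) * ∞ = ∞`.
    refine ⟨C + 1, fun v w => ?_⟩
    have hC' : ∀ v w, G.Adj v w → edist (g v) (g w) ≤ ((C + 1 : ℝ≥0) : ℝ≥0∞) :=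
      fun v w hadj => (hC v w hadj).trans (by gcongr; exact le_self_add)
    rcases eq_or_ne (G.edist v w) ⊤ with htop | htop
    · simp [htop, ENNReal.mul_top]
    · obtain ⟨p, hp⟩ := SimpleGraph.exists_walk_of_edist_ne_top htop
      simpa [← hp] using edist_le_mul_length_of_adj_le hC' p

theorem bornologous_iff_forall_exists_edist_le {X Y : Type*} [EMetricSpace X] [EMetricSpace Y]
    {f : X → Y} :
    Bornologous f ↔ ∀ t : ℝ≥0, ∃ C : ℝ≥0, ∀ x y, edist x y < t → edist (f x) (f y) ≤ C := by
  constructor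
  · intro hf t
    obtain ⟨s, -, hs⟩ := hf (t + 1) (by positivity)
    refine ⟨s.toNNReal, fun x y hxy => (hs x y (hxy.trans ?_)).le⟩
    rw [ENNReal.ofReal_add t.coe_nonneg zero_le_one]
    simp [ENNReal.lt_add_right]
  · intro hf t ht
    obtain ⟨C, hC⟩ := hf t.toNNReal
    refine ⟨C + 1, by positivity, fun x y hxy => (hC x y hxy).trans_lt ?_⟩
    rw [ENNReal.ofReal_add C.coe_nonneg zero_le_one]
    simp [ENNReal.lt_add_right]

/-- `f : X → Y` is bornologous iff for every graph `G` (with its graph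
metric) and every Lipschitz `g : G → X`, the composition `f ∘ g` is Lipschitz. -/
theorem bornologous_iff_comp_lipschitz {X : Type u} {Y : Type v}
    [EMetricSpace X] [EMetricSpace Y] (f : X → Y) :
    Bornologous f ↔
    (∀ (V : Type u) (G : SimpleGraph V) (g : V → X),
        GraphLipschitz G g → GraphLipschitz G (fun v => f (g v))) := by
  simp only [bornologous_iff_forall_exists_edist_le, graphLipschitz_iff_exists_adj_le]
  constructor
  · rintro hf V G g ⟨L, hL⟩
    obtain ⟨C, hC⟩ := hf (L + 1)
    refine ⟨C, fun v w hadj => hC _ _ ((hL v w hadj).trans_lt ?_)⟩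
    exact_mod_cast lt_add_one L
  · intro h t
    let G := SimpleGraph.fromRel fun x y : X => edist x y < t
    have hid : ∀ x y, G.Adj x y → edist x y ≤ t := by
      rintro x y ⟨-, hxy | hxy⟩
      exacts [hxy.le, edist_comm x y ▸ hxy.le]
    obtain ⟨C, hC⟩ := h X G id ⟨t, hid⟩
    refine ⟨C, fun x y hxy => ?_⟩
    rcases eq_or_ne x y with rfl | hne
    · simp
    · exact hC x y ⟨hne, .inl hxy⟩
end

section
/- Let t > 0 and let (X,d) be a t-geodesic metric space. Then the identity function from (X,d) to (X,d_t), where d_t is the graph metric of the Rips graph RipsG_t(X), is bornologous; in fact d_t(x,y) ≤ 2·d(x,y)/t + 1 for all x, y ∈ X. -/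
open scoped ENNReal

/-- The Rips graph of a metric space at scale `t`: `[x,y]` is an edge whenever
`x ≠ y` and `d(x,y) ≤ t`. -/
def ripsGraph (X : Type u) [MetricSpace X] (t : ℝ) : SimpleGraph X where
  Adj x y := x ≠ y ∧ dist x y ≤ t
  symm := by
    constructor
    rintro x y ⟨hxy, hd⟩
    exact ⟨hxy.symm, by rwa [dist_comm]⟩
  loopless := ⟨fun x h => h.1 rfl⟩

/-- A metric space is `t`-geodesic if every two points are joined by a `t`-chain whose
consecutive distances add up exactly to the distance between the points. -/
def TGeodesic (t : ℝ) (X : Type u) [MetricSpace X] : Prop :=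
  ∀ x y : X, ∃ (k : ℕ) (c : ℕ → X), c 0 = x ∧ c k = y ∧
    (∀ i < k, dist (c i) (c (i + 1)) ≤ t) ∧
    dist x y = ∑ i ∈ Finset.range k, dist (c i) (c (i + 1))

theorem exists_le_lt_succ_of_le_of_lt {α : Type*} [LinearOrder α] {u : ℕ → α} {a : α}
    {k : ℕ} (h0 : u 0 ≤ a) (hk : a < u k) : ∃ j < k, u j ≤ a ∧ a < u (j + 1) := by
  induction k with
  | zero => exact absurd hk h0.not_gt
  | succ k ih =>
    by_cases h : a < u k
    · obtain ⟨j, hjk, hj⟩ := ih h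
      exact ⟨j, hjk.trans (lt_add_one k), hj⟩
    · exact ⟨k, lt_add_one k, not_lt.1 h, hk⟩

theorem ripsGraph_edist_le_one_of_dist_le {X : Type u} [MetricSpace X] {t : ℝ} {x y : X}
    (h : dist x y ≤ t) : (ripsGraph X t).edist x y ≤ 1 := by
  rcases eq_or_ne x y with rfl | hxy
  · simp
  · have hadj : (ripsGraph X t).Adj x y := ⟨hxy, h⟩
    exact (SimpleGraph.edist_eq_one_iff_adj.mpr hadj).le

namespace TGeodesic

variable {X : Type u} [MetricSpace X] {t : ℝ}

/-- Greedy step: jump to the last chain point within `t` of `x`, then one link further; as the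
chain is geodesic, the rest of it, hence `dist z y`, is shorter by more than `t`. -/
theorem exists_ripsGraph_edist_le_two (ht : 0 ≤ t) (hX : TGeodesic t X) {x y : X}
    (hxy : t < dist x y) : ∃ z, (ripsGraph X t).edist x z ≤ 2 ∧ dist z y < dist x y - t := by
  obtain ⟨k, c, rfl, rfl, hstep, hsum⟩ := hX x y
  set S : ℕ → ℝ := fun m => ∑ i ∈ Finset.range m, dist (c i) (c (i + 1))
  obtain ⟨j, hjk, hSj, hSj'⟩ : ∃ j < k, S j ≤ t ∧ t < S (j + 1) :=
    exists_le_lt_succ_of_le_of_lt (by simpa [S] using ht) (by simpa [S, ← hsum] using hxy)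
  refine ⟨c (j + 1), ?_, ?_⟩
  · calc (ripsGraph X t).edist (c 0) (c (j + 1))
        ≤ (ripsGraph X t).edist (c 0) (c j) + (ripsGraph X t).edist (c j) (c (j + 1)) :=
          SimpleGraph.edist_triangle
      _ ≤ 1 + 1 := add_le_add
          (ripsGraph_edist_le_one_of_dist_le ((dist_le_range_sum_dist c j).trans hSj))
          (ripsGraph_edist_le_one_of_dist_le (hstep j hjk))
      _ = 2 := one_add_one_eq_two
  · have hsplit := Finset.sum_range_add_sum_Ico (fun i => dist (c i) (c (i + 1))) hjk
    have htail := dist_le_Ico_sum_dist c hjk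
    simp only [S] at hSj'
    linarith

theorem ripsGraph_edist_le_two_mul_add_one (ht : 0 ≤ t) (hX : TGeodesic t X) (n : ℕ) {x y : X}
    (h : dist x y ≤ (n + 1) * t) : (ripsGraph X t).edist x y ≤ 2 * n + 1 := by
  induction n generalizing x with
  | zero => simpa using ripsGraph_edist_le_one_of_dist_le (by simpa using h)
  | succ n ih =>
    by_cases hxy : dist x y ≤ t
    · exact (ripsGraph_edist_le_one_of_dist_le hxy).trans le_add_self
    obtain ⟨z, hxz, hzy⟩ := hX.exists_ripsGraph_edist_le_two ht (not_le.1 hxy)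
    have hzy' : dist z y ≤ (n + 1) * t := by push_cast at h; linarith
    calc (ripsGraph X t).edist x y
        ≤ (ripsGraph X t).edist x z + (ripsGraph X t).edist z y := SimpleGraph.edist_triangle
      _ ≤ 2 + (2 * n + 1) := add_le_add hxz (ih hzy')
      _ = 2 * (n + 1 : ℕ) + 1 := by push_cast; ring

theorem ripsGraph_edist_le (ht : 0 < t) (hX : TGeodesic t X) (x y : X) :
    ((ripsGraph X t).edist x y : ℝ≥0∞) ≤ ENNReal.ofReal (2 * dist x y / t + 1) := by
  set n := ⌊dist x y / t⌋₊
  have hn : (n : ℝ) ≤ dist x y / t := Nat.floor_le (by positivity)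
  have hdist : dist x y ≤ (n + 1) * t :=
    ((div_lt_iff₀ ht).1 (Nat.lt_floor_add_one (dist x y / t))).le
  calc ((ripsGraph X t).edist x y : ℝ≥0∞)
      ≤ ((2 * n + 1 : ℕ∞) : ℝ≥0∞) :=
        ENat.toENNReal_le.mpr (hX.ripsGraph_edist_le_two_mul_add_one ht.le n hdist)
    _ = ENNReal.ofReal (2 * n + 1) := by
        rw [ENNReal.ofReal_add (by positivity) zero_le_one, ENNReal.ofReal_mul zero_le_two]
        simp
    _ ≤ ENNReal.ofReal (2 * dist x y / t + 1) := by
        gcongr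
        rw [mul_div_assoc]
        gcongr

end TGeodesic

/-- for a `t`-geodesic metric space the identity `(X,d) → (X,d_t)` into
the graph metric of `RipsG_t(X)` is bornologous; in fact
`d_t(x,y) ≤ 2·d(x,y)/t + 1` for all `x, y`. -/
theorem tGeodesic_identity_to_rips_bornologous {X : Type u} [MetricSpace X]
    (t : ℝ) (ht : 0 < t) (hX : TGeodesic t X) :
    -- the identity (X,d) → (X,d_t) is bornologous
    (∀ r : ℝ, 0 < r → ∃ c : ℝ, 0 < c ∧ ∀ x y : X,
      dist x y < r → ((ripsGraph X t).edist x y : ℝ≥0∞) < ENNReal.ofReal c) ∧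
    -- in fact d_t(x,y) ≤ 2·d(x,y)/t + 1
    (∀ x y : X,
      ((ripsGraph X t).edist x y : ℝ≥0∞) ≤ ENNReal.ofReal (2 * dist x y / t + 1)) := by
  refine ⟨fun r hr => ⟨2 * r / t + 2, by positivity, fun x y hxy => ?_⟩,
    hX.ripsGraph_edist_le ht⟩
  calc ((ripsGraph X t).edist x y : ℝ≥0∞) ≤ ENNReal.ofReal (2 * dist x y / t + 1) :=
        hX.ripsGraph_edist_le ht x y
    _ < ENNReal.ofReal (2 * r / t + 2) := by
        rw [ENNReal.ofReal_lt_ofReal_iff (by positivity)]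
        have : 2 * dist x y / t ≤ 2 * r / t := by gcongr
        linarith
end

section
/- Let (X,d) be a metric space, t > 0, n ∈ ℕ, and D < ∞. Let {V_j}_{j∈J} be a cover of X with diam V_j ≤ D for all j ∈ J, and f : X → J a function with B(x,t) ⊆ V_{f(x)} for every x ∈ X, where B(x,t) denotes the open ball. Let L be a set, K a family of nonempty finite subsets of L closed under passing to nonempty subsets with |Δ| ≤ n+1 for every Δ ∈ K, and let g : X → L and h : L → J be functions such that: (i) for all x_0, …, x_k ∈ X, if B(x_0,t) ∩ … ∩ B(x_k,t) ≠ ∅, then {g(x_0), …, g(x_k)} ∈ K; (ii) for every x ∈ X, V_{f(x)} ∩ V_{h(g(x))} ≠ ∅. For l ∈ L set W_l = ⋃{B(x,t) : x ∈ X, g(x) = l}. Then the family {W_l}_{l∈L}: (1) covers X with Lebesgue number at least t, i.e., every ball B(x,t) is contained in some W_l; (2) has multiplicity at most n+1, i.e., no point of X belongs to W_{l_0}, …, W_{l_{n+1}} for n+2 pairwise distinct elements l_0, …, l_{n+1} of L; and (3) is uniformly bounded, with diam W_l ≤ 3D for every l ∈ L. -/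
/-! Every `t`-ball `B(x,t)` lies in `W_{g x}`. A point lying in the sets `W_l`, `l ∈ s`, lies in
`t`-balls around centers `x_l` with `g x_l = l`; these balls have a common point, so by (i) the
labels `s` span a simplex of `K` and there are at most `n + 1` of them. Finally a point of `W_l`
lies in some `V_{f x}` with `g x = l`, and `V_{f x}` meets `V_{h l}`: two points of `W_l` are
joined by a chain through `V_{f x}`, `V_{h l}`, `V_{f x'}` of three steps of length `≤ D`. -/

theorem exists_finset_subset_image_mem_iInter {ι α L : Type*} [DecidableEq L]
    {U : ι → Set α} {g : ι → L} {x : α} {s : Finset L}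
    (hs : ∀ l ∈ s, x ∈ ⋃ i ∈ {i | g i = l}, U i) :
    ∃ s' : Finset ι, s ⊆ s'.image g ∧ x ∈ ⋂ i ∈ s', U i := by
  classical
  have hcenter : ∀ l ∈ s, ∃ i, g i = l ∧ x ∈ U i := by
    simpa only [Set.mem_iUnion₂, Set.mem_ofPred_eq, exists_prop] using hs
  choose c hgc hxc using hcenter
  refine ⟨s.attach.image fun l => c l.1 l.2, fun l hl => ?_, ?_⟩
  · rw [Finset.image_image]
    exact Finset.mem_image.mpr ⟨⟨l, hl⟩, Finset.mem_attach _ _, hgc l hl⟩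
  · simp only [Set.mem_iInter, Finset.mem_image]
    rintro _ ⟨l, -, rfl⟩
    exact hxc l.1 l.2

theorem dist_le_three_mul_of_inter_nonempty {X : Type*} [PseudoMetricSpace X] {D : ℝ}
    {A B C : Set X} (hA : ∀ a ∈ A, ∀ b ∈ A, dist a b ≤ D) (hB : ∀ a ∈ B, ∀ b ∈ B, dist a b ≤ D)
    (hC : ∀ a ∈ C, ∀ b ∈ C, dist a b ≤ D) (hAC : (A ∩ C).Nonempty) (hBC : (B ∩ C).Nonempty)
    {a b : X} (ha : a ∈ A) (hb : b ∈ B) : dist a b ≤ 3 * D := by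
  obtain ⟨p, hpA, hpC⟩ := hAC
  obtain ⟨q, hqB, hqC⟩ := hBC
  calc dist a b ≤ dist a p + dist p q + dist q b := dist_triangle4 a p q b
    _ ≤ D + D + D := by gcongr <;> solve_by_elim
    _ = 3 * D := by ring

theorem asdim_cover_construction_general {X : Type u} [MetricSpace X]
    (t : ℝ) (n : ℕ) (D : ℝ)
    {J : Type v} (V : J → Set X)
    (hbdd : ∀ j : J, ∀ a ∈ V j, ∀ b ∈ V j, dist a b ≤ D)
    (f : X → J) (hf : ∀ x : X, Metric.ball x t ⊆ V (f x))
    {L : Type w} [DecidableEq L]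
    (K : Set (Finset L))
    (hKdim : ∀ Δ ∈ K, Δ.card ≤ n + 1)
    (g : X → L) (h : L → J)
    -- (i) g is simplicial on the nerve of the cover by t-balls
    (hg : ∀ s : Finset X, s.Nonempty → (⋂ x ∈ s, Metric.ball x t).Nonempty →
      s.image g ∈ K)
    -- (ii) h ∘ g is contiguous to f
    (hcont : ∀ x : X, (V (f x) ∩ V (h (g x))).Nonempty) :
    -- W_l = union of the t-balls centered at points mapping to l
    let W : L → Set X := fun l => ⋃ x ∈ {x : X | g x = l}, Metric.ball x t
    -- (1) {W_l} covers X with Lebesgue number at least t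
    (∀ x : X, ∃ l : L, Metric.ball x t ⊆ W l) ∧
    -- (2) {W_l} has multiplicity at most n+1
    (∀ (x : X) (s : Finset L), (∀ l ∈ s, x ∈ W l) → s.card ≤ n + 1) ∧
    -- (3) {W_l} is uniformly bounded: diam W_l ≤ 3D
    (∀ l : L, ∀ a ∈ W l, ∀ b ∈ W l, dist a b ≤ 3 * D) := by
  intro W
  refine ⟨fun x => ⟨g x, Set.subset_biUnion_of_mem (u := fun y => Metric.ball y t) rfl⟩, ?_, ?_⟩
  · intro x s hs
    obtain ⟨s', hss', hx⟩ := exists_finset_subset_image_mem_iInter hs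
    rcases s.eq_empty_or_nonempty with rfl | hne
    · simp
    have hs' : s'.Nonempty := Finset.image_nonempty.mp (hne.mono hss')
    exact (Finset.card_le_card hss').trans (hKdim _ (hg s' hs' ⟨x, hx⟩))
  · intro l a ha b hb
    simp only [W, Set.mem_iUnion₂, Set.mem_ofPred_eq, exists_prop] at ha hb
    obtain ⟨xa, rfl, hxa⟩ := ha
    obtain ⟨xb, hgb, hxb⟩ := hb
    refine dist_le_three_mul_of_inter_nonempty (hbdd _) (hbdd _) (hbdd (h (g xa)))
      (hcont xa) ?_ (hf xa hxa) (hf xb hxb)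
    simpa only [hgb] using hcont xb

/-- the key construction for `asdim`. Given a uniformly `D`-bounded
cover `{V_j}` absorbing `t`-balls via `f`, and a contiguous factorization `h ∘ g` of
`f` through an at most `n`-dimensional complex `K` on the vertex set `L`, the family
`W_l = ⋃ {B(x,t) : g x = l}` covers `X` with Lebesgue number at least `t`, has
multiplicity at most `n+1`, and is uniformly bounded with `diam W_l ≤ 3D`. -/
theorem asdim_cover_construction {X : Type u} [MetricSpace X]
    (t : ℝ) (ht : 0 < t) (n : ℕ) (D : ℝ)
    {J : Type v} (V : J → Set X)
    (hcov : ∀ x : X, ∃ j : J, x ∈ V j)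
    (hbdd : ∀ j : J, ∀ a ∈ V j, ∀ b ∈ V j, dist a b ≤ D)
    (f : X → J) (hf : ∀ x : X, Metric.ball x t ⊆ V (f x))
    {L : Type w} [DecidableEq L]
    (K : Set (Finset L))
    (hKne : ∀ Δ ∈ K, Δ.Nonempty)
    (hKsub : ∀ Δ ∈ K, ∀ Δ' : Finset L, Δ' ⊆ Δ → Δ'.Nonempty → Δ' ∈ K)
    (hKdim : ∀ Δ ∈ K, Δ.card ≤ n + 1)
    (g : X → L) (h : L → J)
    -- (i) g is simplicial on the nerve of the cover by t-balls
    (hg : ∀ s : Finset X, s.Nonempty → (⋂ x ∈ s, Metric.ball x t).Nonempty →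
      s.image g ∈ K)
    -- (ii) h ∘ g is contiguous to f
    (hcont : ∀ x : X, (V (f x) ∩ V (h (g x))).Nonempty) :
    -- W_l = union of the t-balls centered at points mapping to l
    let W : L → Set X := fun l => ⋃ x ∈ {x : X | g x = l}, Metric.ball x t
    -- (1) {W_l} covers X with Lebesgue number at least t
    (∀ x : X, ∃ l : L, Metric.ball x t ⊆ W l) ∧
    -- (2) {W_l} has multiplicity at most n+1
    (∀ (x : X) (s : Finset L), (∀ l ∈ s, x ∈ W l) → s.card ≤ n + 1) ∧
    -- (3) {W_l} is uniformly bounded: diam W_l ≤ 3D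
    (∀ l : L, ∀ a ∈ W l, ∀ b ∈ W l, dist a b ≤ 3 * D) :=
  asdim_cover_construction_general t n D V hbdd f hf K hKdim g h hg hcont
end

section
/- For a metric space (X,d) the following are equivalent: (a) X has Property A: for every R, ε > 0 there exist S > R and a function ξ : X → ℓ¹(X) such that ‖ξ_x‖₁ = 1 for every x ∈ X, ξ_x is supported in the ball B(x,S), and ‖ξ_x − ξ_y‖₁ < ε whenever d(x,y) ≤ R; (b) for every R, ε > 0 there exist S > R and a function ξ : X → ℓ¹(X) such that each ξ_x has non-negative values and finite support contained in B(x,S), ‖ξ_x‖₁ = 1, and ‖ξ_x − ξ_y‖₁ < ε whenever d(x,y) ≤ R. -/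
open scoped ENNReal

variable {X : Type*}

local notation "L" => lp (fun _ : X => ℝ) 1

lemma my_summ (f : lp (fun _ : X => ℝ) 1) : Summable (fun i => |f i|) := by
  have := lp.memℓp f
  rw [memℓp_gen_iff (by norm_num)] at this
  simpa using this

lemma my_norm1 (f : lp (fun _ : X => ℝ) 1) : ‖f‖ = ∑' i, |f i| := by
  have := lp.norm_eq_tsum_rpow (p := 1) (by norm_num) f
  simpa using this

lemma my_mem {f : X → ℝ} (h : Summable fun i => |f i|) : Memℓp f 1 := by
  apply memℓp_gen (p := 1)
  simpa using h

noncomputable def absLp (f : lp (fun _ : X => ℝ) 1) : lp (fun _ : X => ℝ) 1 :=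
  ⟨fun i => |f i|, my_mem (by simpa using my_summ f)⟩

@[simp] lemma absLp_apply (f : lp (fun _ : X => ℝ) 1) (i : X) : absLp f i = |f i| := rfl

lemma norm_absLp (f : lp (fun _ : X => ℝ) 1) : ‖absLp f‖ = ‖f‖ := by
  rw [my_norm1, my_norm1]
  simp [abs_abs]

lemma norm_absLp_sub_le (f g : lp (fun _ : X => ℝ) 1) :
    ‖absLp f - absLp g‖ ≤ ‖f - g‖ := by
  rw [my_norm1, my_norm1]
  apply Summable.tsum_le_tsum _ (my_summ _) (my_summ _)
  intro i
  have h1 : (absLp f - absLp g) i = |f i| - |g i| := by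
    rw [lp.coeFn_sub]; rfl
  have h2 : (f - g) i = f i - g i := by
    rw [lp.coeFn_sub]; rfl
  rw [h1, h2]
  exact abs_abs_sub_abs_le_abs_sub _ _

noncomputable def truncLp (f : lp (fun _ : X => ℝ) 1) (s : Finset X) : lp (fun _ : X => ℝ) 1 :=
  ⟨Set.indicator ↑s f, my_mem (summable_of_ne_finset_zero (s := s) (by
    intro i hi
    rw [Set.indicator_of_notMem (by simpa using hi)]
    simp))⟩

lemma truncLp_apply (f : lp (fun _ : X => ℝ) 1) (s : Finset X) (i : X) :
    truncLp f s i = Set.indicator ↑s f i := rfl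

lemma norm_truncLp (f : lp (fun _ : X => ℝ) 1) (s : Finset X) :
    ‖truncLp f s‖ = ∑ i ∈ s, |f i| := by
  rw [my_norm1]
  rw [tsum_eq_sum (s := s) (by
    intro i hi
    rw [truncLp_apply, Set.indicator_of_notMem (by simpa using hi)]
    simp)]
  apply Finset.sum_congr rfl
  intro i hi
  rw [truncLp_apply, Set.indicator_of_mem (by simpa using hi)]

lemma norm_sub_truncLp (f : lp (fun _ : X => ℝ) 1) (s : Finset X) (hf : ∀ i, 0 ≤ f i) :
    ‖f - truncLp f s‖ = ‖f‖ - ‖truncLp f s‖ := by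
  rw [my_norm1, my_norm1, my_norm1]
  have key : ∀ i, |(f - truncLp f s) i| = |f i| - |truncLp f s i| := by
    intro i
    have h2 : (f - truncLp f s) i = f i - truncLp f s i := by rw [lp.coeFn_sub]; rfl
    rw [h2, truncLp_apply]
    by_cases hi : i ∈ (s : Set X)
    · rw [Set.indicator_of_mem hi]; simp
    · rw [Set.indicator_of_notMem hi]
      simp [abs_of_nonneg (hf i)]
  rw [tsum_congr key, Summable.tsum_sub (my_summ f) (my_summ _)]

lemma exists_finset_norm (f : lp (fun _ : X => ℝ) 1) {δ : ℝ} (hδ : 0 < δ) :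
    ∃ s : Finset X, ‖f‖ - δ < ∑ i ∈ s, |f i| := by
  have h := (my_summ f).hasSum
  have hlt : ‖f‖ - δ < ∑' i, |f i| := by rw [← my_norm1] at *; linarith
  exact (h.eventually (eventually_gt_nhds hlt)).exists

lemma sum_le_norm (f : lp (fun _ : X => ℝ) 1) (s : Finset X) :
    ∑ i ∈ s, |f i| ≤ ‖f‖ := by
  rw [my_norm1]
  exact Summable.sum_le_tsum s (fun i _ => abs_nonneg _) (my_summ f)


/-- Property A of a metric space `(X,d)` (condition (a)) is
equivalent to the a priori stronger condition (b) where the functions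
`ξ_x ∈ ℓ¹(X)` may be taken non-negative with finite support. -/
theorem propertyA_iff_propertyA_with_nonneg_finite_supports
    {X : Type u} [MetricSpace X] :
    -- (a) Property A
    (∀ R ε : ℝ, 0 < R → 0 < ε → ∃ S : ℝ, R < S ∧
      ∃ ξ : X → lp (fun _ : X => ℝ) 1,
        (∀ x : X, ‖ξ x‖ = 1) ∧
        (∀ x z : X, z ∉ Metric.ball x S → ξ x z = 0) ∧
        (∀ x y : X, dist x y ≤ R → ‖ξ x - ξ y‖ < ε)) ↔
    -- (b) Property A with non-negative, finitely supported functions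
    (∀ R ε : ℝ, 0 < R → 0 < ε → ∃ S : ℝ, R < S ∧
      ∃ ξ : X → lp (fun _ : X => ℝ) 1,
        (∀ x : X, ‖ξ x‖ = 1) ∧
        (∀ x z : X, 0 ≤ ξ x z) ∧
        (∀ x : X, (Function.support fun z : X => ξ x z).Finite) ∧
        (∀ x z : X, z ∉ Metric.ball x S → ξ x z = 0) ∧
        (∀ x y : X, dist x y ≤ R → ‖ξ x - ξ y‖ < ε)) := by
  constructor
  · -- (a) → (b)
    intro ha R ε hR hε
    obtain ⟨S, hS, ξ, hnorm, hsupp, hclose⟩ := ha R (ε/3) hR (by linarith)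
    set δ : ℝ := min (1/2) (ε/9) with hδdef
    have hδ0 : 0 < δ := lt_min (by norm_num) (by linarith)
    have hδ2 : δ ≤ 1/2 := min_le_left _ _
    have hδ9 : δ ≤ ε/9 := min_le_right _ _
    -- η x = |ξ x|
    set η : X → lp (fun _ : X => ℝ) 1 := fun x => absLp (ξ x) with hη
    have hηnorm : ∀ x, ‖η x‖ = 1 := fun x => by rw [hη, norm_absLp, hnorm]
    -- choose finite sets
    have hFex : ∀ x : X, ∃ s : Finset X, 1 - δ < ∑ i ∈ s, |η x i| := by
      intro x
      obtain ⟨s, hs⟩ := exists_finset_norm (η x) hδ0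
      exact ⟨s, by rw [hηnorm x] at hs; exact hs⟩
    choose F hF using hFex
    set ζ : X → lp (fun _ : X => ℝ) 1 := fun x => truncLp (η x) (F x) with hζ
    have hζnorm_lb : ∀ x, 1 - δ < ‖ζ x‖ := by
      intro x
      rw [hζ, norm_truncLp]
      have : ∀ i ∈ F x, |(η x) i| = |(|ξ x i|)| := fun i _ => rfl
      calc 1 - δ < ∑ i ∈ F x, |η x i| := hF x
        _ = ∑ i ∈ F x, |(η x) i| := rfl
    have hζpos : ∀ x, 0 < ‖ζ x‖ := fun x => lt_of_le_of_lt (by linarith) (hζnorm_lb x)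
    have hζub : ∀ x, ‖ζ x‖ ≤ 1 := by
      intro x
      rw [hζ, norm_truncLp]
      calc ∑ i ∈ F x, |η x i| ≤ ‖η x‖ := sum_le_norm _ _
        _ = 1 := hηnorm x
    have hηζ : ∀ x, ‖η x - ζ x‖ ≤ δ := by
      intro x
      rw [hζ, norm_sub_truncLp (η x) (F x) (fun i => by rw [hη]; exact abs_nonneg _)]
      have := hζnorm_lb x
      rw [hηnorm x]
      rw [hζ] at this
      linarith
    -- normalized
    set ξ' : X → lp (fun _ : X => ℝ) 1 := fun x => (‖ζ x‖)⁻¹ • ζ x with hξ'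
    have hξ'norm : ∀ x, ‖ξ' x‖ = 1 := by
      intro x
      rw [hξ', norm_smul, norm_inv, norm_norm, inv_mul_cancel₀ (ne_of_gt (hζpos x))]
    have hξ'ζ : ∀ x, ‖ξ' x - ζ x‖ ≤ δ := by
      intro x
      have heq : ξ' x - ζ x = ((‖ζ x‖)⁻¹ - 1) • ζ x := by
        rw [hξ', sub_smul, one_smul]
      rw [heq, norm_smul, Real.norm_eq_abs]
      have hc : (0:ℝ) < ‖ζ x‖ := hζpos x
      have h1 : |(‖ζ x‖)⁻¹ - 1| * ‖ζ x‖ = |1 - ‖ζ x‖| := by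
        calc |(‖ζ x‖)⁻¹ - 1| * ‖ζ x‖ = |(‖ζ x‖)⁻¹ - 1| * |‖ζ x‖| := by rw [abs_of_pos hc]
          _ = |((‖ζ x‖)⁻¹ - 1) * ‖ζ x‖| := (abs_mul _ _).symm
          _ = |1 - ‖ζ x‖| := by rw [sub_mul, inv_mul_cancel₀ (ne_of_gt hc), one_mul]
      rw [h1, abs_of_nonneg (by linarith [hζub x])]
      linarith [hζnorm_lb x]
    have hξ'η : ∀ x, ‖ξ' x - η x‖ ≤ 2 * δ := by
      intro x
      calc ‖ξ' x - η x‖ ≤ ‖ξ' x - ζ x‖ + ‖ζ x - η x‖ := norm_sub_le_norm_sub_add_norm_sub _ _ _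
        _ = ‖ξ' x - ζ x‖ + ‖η x - ζ x‖ := by rw [norm_sub_rev (ζ x)]
        _ ≤ δ + δ := add_le_add (hξ'ζ x) (hηζ x)
        _ = 2 * δ := by ring
    refine ⟨S, hS, ξ', hξ'norm, ?_, ?_, ?_, ?_⟩
    · -- nonneg
      intro x z
      have : ξ' x z = (‖ζ x‖)⁻¹ * ζ x z := by
        rw [hξ', lp.coeFn_smul]; rfl
      rw [this]
      apply mul_nonneg (inv_nonneg.mpr (norm_nonneg _))
      rw [hζ, truncLp_apply]
      apply Set.indicator_apply_nonneg
      intro _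
      exact abs_nonneg _
    · -- finite support
      intro x
      apply Set.Finite.subset (F x).finite_toSet
      intro z hz
      simp only [Function.mem_support] at hz
      by_contra hmem
      apply hz
      have : ξ' x z = (‖ζ x‖)⁻¹ * ζ x z := by rw [hξ', lp.coeFn_smul]; rfl
      rw [this, hζ, truncLp_apply, Set.indicator_of_notMem (by simpa using hmem)]
      ring
    · -- support in ball
      intro x z hz
      have : ξ' x z = (‖ζ x‖)⁻¹ * ζ x z := by rw [hξ', lp.coeFn_smul]; rfl
      rw [this, hζ, truncLp_apply]
      have hζz : Set.indicator (↑(F x)) (⇑(η x)) z = 0 := by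
        by_cases hmem : z ∈ (↑(F x) : Set X)
        · rw [Set.indicator_of_mem hmem, hη, absLp_apply, hsupp x z hz, abs_zero]
        · exact Set.indicator_of_notMem hmem _
      rw [hζz]; ring
    · -- closeness
      intro x y hxy
      have h1 : ‖η x - η y‖ ≤ ‖ξ x - ξ y‖ := norm_absLp_sub_le _ _
      have h2 := hclose x y hxy
      calc ‖ξ' x - ξ' y‖ ≤ ‖ξ' x - η x‖ + ‖η x - ξ' y‖ :=
            norm_sub_le_norm_sub_add_norm_sub _ _ _
        _ ≤ ‖ξ' x - η x‖ + (‖η x - η y‖ + ‖η y - ξ' y‖) := by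
            linarith [norm_sub_le_norm_sub_add_norm_sub (η x) (η y) (ξ' y)]
        _ = ‖ξ' x - η x‖ + ‖η x - η y‖ + ‖ξ' y - η y‖ := by
            rw [norm_sub_rev (η y)]; ring
        _ ≤ 2*δ + ‖ξ x - ξ y‖ + 2*δ := by
            linarith [hξ'η x, hξ'η y, h1]
        _ < 2*δ + ε/3 + 2*δ := by linarith
        _ ≤ ε := by linarith
  · -- (b) → (a)
    intro hb R ε hR hε
    obtain ⟨S, hS, ξ, hnorm, _, _, hsupp, hclose⟩ := hb R ε hR hε
    exact ⟨S, hS, ξ, hnorm, hsupp, hclose⟩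
end
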